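/- Let α, β, v ∈ ℝ with β ≠ 0. On the open set U = {(S,I,R) ∈ ℝ³ : S > 0 and I > 0}, define the skew-symmetric matrix-valued map π₂ with entries π₂_{SI} = −β·S·I, π₂_{SR} = β·S·I, π₂_{IR} = −β·S·I, and the Hamiltonian H₂(S,I,R) = −(R + (α/β)·log S − (v/β)·log I). Then (i) π₂ satisfies the Jacobi identity on U; (ii) for all (S,I,R) ∈ U, π₂·∇H₂ = (−β·S·I − v·S, β·S·I − α·I, α·I + v·S), the vector field of the SIR model with vaccination rate v·S; and (iii) the sum of π₂ with the first structure π₁ (entries π₁_{SI} = 0, π₁_{SR} = −β·S·I − v·S, π₁_{IR} = β·S·I − α·I) also satisfies the Jacobi identity, so the two structures are compatible. -/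

import Mathlib

/-- A pointwise skew-symmetric matrix-valued map satisfies the Jacobi identity on a set `U`
if for all `x ∈ U` and indices `i j k`,
`∑ l, (P_{l i}(x)·∂_l P_{j k}(x) + P_{l j}(x)·∂_l P_{k i}(x) + P_{l k}(x)·∂_l P_{i j}(x)) = 0`. -/
def JacobiIdentityOn {n : Type*} [Fintype n] [DecidableEq n]
    (P : (n → ℝ) → Matrix n n ℝ) (U : Set (n → ℝ)) : Prop :=
  ∀ x ∈ U, ∀ i j k : n,
    ∑ l : n,
      (P x l i * fderiv ℝ (fun y => P y j k) x (Pi.single l 1) +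
        P x l j * fderiv ℝ (fun y => P y k i) x (Pi.single l 1) +
        P x l k * fderiv ℝ (fun y => P y i j) x (Pi.single l 1)) = 0

/-- The Hamiltonian vector field `π(x)·∇H(x)` of a matrix-valued map `P` and Hamiltonian `H`. -/
noncomputable def hamVF {n : Type*} [Fintype n] [DecidableEq n]
    (P : (n → ℝ) → Matrix n n ℝ) (H : (n → ℝ) → ℝ) (x : n → ℝ) : n → ℝ :=
  (P x).mulVec fun j => fderiv ℝ H x (Pi.single j 1)

/-- The second Poisson structure of the SIR model with vaccination rate `v·S`, on coordinates
`(S,I,R) = (x 0, x 1, x 2)`: `π₂_{SI} = −β·S·I`, `π₂_{SR} = β·S·I`, `π₂_{IR} = −β·S·I`. -/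
noncomputable def sirVaccSPoisson2 (β : ℝ) (x : Fin 3 → ℝ) : Matrix (Fin 3) (Fin 3) ℝ :=
  Matrix.of
    ![![0, -β * x 0 * x 1, β * x 0 * x 1],
      ![-(-β * x 0 * x 1), 0, -β * x 0 * x 1],
      ![-(β * x 0 * x 1), -(-β * x 0 * x 1), 0]]

/-- The first Poisson structure of the SIR model with vaccination rate `v·S`:
`π₁_{SI} = 0`, `π₁_{SR} = −β·S·I − v·S`, `π₁_{IR} = β·S·I − α·I`. -/
noncomputable def sirVaccSPoisson1 (α β v : ℝ) (x : Fin 3 → ℝ) : Matrix (Fin 3) (Fin 3) ℝ :=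
  Matrix.of
    ![![0, 0, -β * x 0 * x 1 - v * x 0],
      ![0, 0, β * x 0 * x 1 - α * x 1],
      ![-(-β * x 0 * x 1 - v * x 0), -(β * x 0 * x 1 - α * x 1), 0]]

/-!
In dimension three a skew-symmetric `π` is encoded by the vector field
`J = (π₁₂, π₂₀, π₀₁)`, and its Jacobiator is alternating in `(i, j, k)`, so the Jacobi identity
reduces to the single component `(0, 1, 2)`, which is `J · curl J`. For `π₂ = βSI · A` with `A`
constant, `J = f a` with `a` constant and `J · curl J = f a · (∇f × a) = 0`. For `π₁ + π₂`,
`J = (-αI, vS, -βSI)` and `J · curl J = αβSI + βvSI - βSI(α + v) = 0`. The Hamiltonian vector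
field is `π₂` applied to `∇H₂ = (-α/(βS), v/(βI), -1)`.
-/

open scoped Matrix

theorem Matrix.apply_swap_of_transpose_eq_neg {n R : Type*} [Neg R] {A : Matrix n n R}
    (hA : Aᵀ = -A) (i j : n) : A j i = -A i j :=
  congrFun (congrFun hA i) j

theorem Matrix.apply_self_of_transpose_eq_neg {n R : Type*} [AddGroup R] [IsAddTorsionFree R]
    {A : Matrix n n R} (hA : Aᵀ = -A) (i : n) : A i i = 0 :=
  self_eq_neg.mp (A.apply_swap_of_transpose_eq_neg hA i i)

theorem fderiv_apply_eq_proj {ι 𝕜 : Type*} [Fintype ι] [NontriviallyNormedField 𝕜]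
    (x : ι → 𝕜) (i : ι) :
    fderiv 𝕜 (fun y : ι → 𝕜 => y i) x = ContinuousLinearMap.proj i :=
  (hasFDerivAt_apply i x).fderiv

section Jacobiator

variable {n : Type*} [Fintype n] [DecidableEq n]

noncomputable def jacobiator (P : (n → ℝ) → Matrix n n ℝ) (x : n → ℝ) (i j k : n) : ℝ :=
  ∑ l : n,
    (P x l i * fderiv ℝ (fun y => P y j k) x (Pi.single l 1) +
      P x l j * fderiv ℝ (fun y => P y k i) x (Pi.single l 1) +
      P x l k * fderiv ℝ (fun y => P y i j) x (Pi.single l 1))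

theorem jacobiIdentityOn_iff_jacobiator (P : (n → ℝ) → Matrix n n ℝ) (U : Set (n → ℝ)) :
    JacobiIdentityOn P U ↔ ∀ x ∈ U, ∀ i j k, jacobiator P x i j k = 0 :=
  Iff.rfl

theorem jacobiator_rotate (P : (n → ℝ) → Matrix n n ℝ) (x : n → ℝ) (i j k : n) :
    jacobiator P x j k i = jacobiator P x i j k :=
  Finset.sum_congr rfl fun _ _ => by ring

variable {P : (n → ℝ) → Matrix n n ℝ} (hP : ∀ y, (P y)ᵀ = -P y)
include hP

omit [DecidableEq n] in
theorem fderiv_entry_swap (x : n → ℝ) (i j : n) :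
    fderiv ℝ (fun y => P y j i) x = -fderiv ℝ (fun y => P y i j) x := by
  rw [funext fun y => (P y).apply_swap_of_transpose_eq_neg (hP y) i j]
  exact fderiv_fun_neg (f := fun y => P y i j)

omit [Fintype n] [DecidableEq n] in
theorem fderiv_entry_self (x : n → ℝ) (i : n) : fderiv ℝ (fun y => P y i i) x = 0 := by
  rw [funext fun y => (P y).apply_self_of_transpose_eq_neg (hP y) i, fderiv_const_apply]

theorem jacobiator_swap (x : n → ℝ) (i j k : n) :
    jacobiator P x j i k = -jacobiator P x i j k := by
  rw [jacobiator, jacobiator, fderiv_entry_swap hP x k i, fderiv_entry_swap hP x j k,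
    fderiv_entry_swap hP x i j, ← Finset.sum_neg_distrib]
  refine Finset.sum_congr rfl fun _ _ => ?_
  simp only [neg_apply]
  ring

theorem jacobiator_self (x : n → ℝ) (i k : n) : jacobiator P x i i k = 0 := by
  rw [jacobiator, fderiv_entry_swap hP x i k, fderiv_entry_self hP x i]
  refine Finset.sum_eq_zero fun _ _ => ?_
  simp only [neg_apply, zero_apply]
  ring

end Jacobiator

theorem jacobiIdentityOn_fin_three_iff {P : (Fin 3 → ℝ) → Matrix (Fin 3) (Fin 3) ℝ}
    (hP : ∀ y, (P y)ᵀ = -P y) {U : Set (Fin 3 → ℝ)} :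
    JacobiIdentityOn P U ↔ ∀ x ∈ U, jacobiator P x 0 1 2 = 0 := by
  refine ⟨fun h x hx => h x hx 0 1 2, fun h => ?_⟩
  rw [jacobiIdentityOn_iff_jacobiator]
  intro x hx i j k
  have hrot := jacobiator_rotate P x
  have hself := jacobiator_self hP x
  have hself_right (i j : Fin 3) : jacobiator P x i j j = 0 := by
    rw [← hrot]
    exact hself j i
  have hself_outer (i j : Fin 3) : jacobiator P x i j i = 0 := by
    rw [← hrot, ← hrot]
    exact hself i j
  have hswap := jacobiator_swap hP x
  fin_cases i <;> fin_cases j <;> fin_cases k <;>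
    simp [hself, hself_right, hself_outer, hrot 0 1 2, hrot 1 2 0, hswap 0 1 2, hswap 2 0 1,
      hswap 1 2 0, h x hx]

theorem jacobiIdentityOn_smul_const {A : Matrix (Fin 3) (Fin 3) ℝ} (hA : Aᵀ = -A)
    {f : (Fin 3 → ℝ) → ℝ} {U : Set (Fin 3 → ℝ)} (hf : ∀ x ∈ U, DifferentiableAt ℝ f x) :
    JacobiIdentityOn (fun y => f y • A) U := by
  have hskew (y : Fin 3 → ℝ) : (f y • A)ᵀ = -(f y • A) := by
    rw [Matrix.transpose_smul, hA, smul_neg]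
  rw [jacobiIdentityOn_fin_three_iff hskew]
  intro x hx
  simp only [jacobiator, Matrix.smul_apply, smul_eq_mul, Fin.sum_univ_three,
    fderiv_mul_const (hf x hx), smul_apply, A.apply_self_of_transpose_eq_neg hA,
    A.apply_swap_of_transpose_eq_neg hA 0 1, A.apply_swap_of_transpose_eq_neg hA 0 2,
    A.apply_swap_of_transpose_eq_neg hA 1 2]
  ring

theorem sirVaccSPoisson2_eq_smul (β : ℝ) (y : Fin 3 → ℝ) :
    sirVaccSPoisson2 β y = (β * y 0 * y 1) • !![0, -1, 1; 1, 0, -1; -1, 1, 0] := by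
  ext i j
  fin_cases i <;> fin_cases j <;> simp [sirVaccSPoisson2]

theorem jacobiIdentityOn_sirVaccSPoisson2 (β : ℝ) (U : Set (Fin 3 → ℝ)) :
    JacobiIdentityOn (sirVaccSPoisson2 β) U := by
  rw [funext (sirVaccSPoisson2_eq_smul β)]
  refine jacobiIdentityOn_smul_const ?_ fun x _ => by fun_prop
  ext i j
  fin_cases i <;> fin_cases j <;> simp

theorem sirVaccSPoisson1_transpose (α β v : ℝ) (y : Fin 3 → ℝ) :
    (sirVaccSPoisson1 α β v y)ᵀ = -sirVaccSPoisson1 α β v y := by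
  ext i j
  fin_cases i <;> fin_cases j <;> simp [sirVaccSPoisson1]
  ring

theorem sirVaccSPoisson2_transpose (β : ℝ) (y : Fin 3 → ℝ) :
    (sirVaccSPoisson2 β y)ᵀ = -sirVaccSPoisson2 β y := by
  ext i j
  fin_cases i <;> fin_cases j <;> simp [sirVaccSPoisson2]

theorem sirVaccSPoisson1_add_sirVaccSPoisson2 (α β v : ℝ) (y : Fin 3 → ℝ) :
    sirVaccSPoisson1 α β v y + sirVaccSPoisson2 β y =
      !![0, -(β * y 0 * y 1), -(v * y 0); β * y 0 * y 1, 0, -(α * y 1); v * y 0, α * y 1, 0] := by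
  ext i j
  fin_cases i <;> fin_cases j <;> simp [sirVaccSPoisson1, sirVaccSPoisson2] <;> ring

theorem jacobiIdentityOn_sirVaccSPoisson1_add_sirVaccSPoisson2 (α β v : ℝ)
    (U : Set (Fin 3 → ℝ)) :
    JacobiIdentityOn (fun x => sirVaccSPoisson1 α β v x + sirVaccSPoisson2 β x) U := by
  have hskew (y : Fin 3 → ℝ) :
      (sirVaccSPoisson1 α β v y + sirVaccSPoisson2 β y)ᵀ =
        -(sirVaccSPoisson1 α β v y + sirVaccSPoisson2 β y) := by
    rw [Matrix.transpose_add, sirVaccSPoisson1_transpose, sirVaccSPoisson2_transpose, neg_add]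
  rw [jacobiIdentityOn_fin_three_iff hskew]
  intro x _
  simp only [jacobiator, sirVaccSPoisson1_add_sirVaccSPoisson2, Fin.sum_univ_three]
  simp (disch := fun_prop) only [Matrix.of_apply, Matrix.cons_val',
    Matrix.cons_val_zero, Matrix.cons_val_fin_one, Matrix.cons_val, Matrix.cons_val_one,
    fderiv_fun_neg, fderiv_const_mul, fderiv_fun_mul, fderiv_apply_eq_proj, neg_apply, smul_apply,
    add_apply, ContinuousLinearMap.proj_apply, Pi.single_apply, one_ne_zero, zero_ne_one,
    Fin.reduceEq, ↓reduceIte, smul_eq_mul, mul_zero, mul_one, neg_zero, zero_add, add_zero]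
  ring

theorem fderiv_sirVaccSHamiltonian2 (α β v : ℝ) {x : Fin 3 → ℝ} (hS : x 0 ≠ 0) (hI : x 1 ≠ 0)
    (w : Fin 3 → ℝ) :
    fderiv ℝ (fun y : Fin 3 → ℝ => -(y 2 + α / β * Real.log (y 0) - v / β * Real.log (y 1))) x w =
      -(w 2 + α / β * (w 0 / x 0) - v / β * (w 1 / x 1)) := by
  have hlog (i : Fin 3) (hi : x i ≠ 0) : HasFDerivAt (fun y : Fin 3 → ℝ => Real.log (y i))
      ((x i)⁻¹ • ContinuousLinearMap.proj i) x :=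
    (hasFDerivAt_apply (𝕜 := ℝ) (F' := fun _ : Fin 3 => ℝ) i x).log hi
  have hH : HasFDerivAt
      (fun y : Fin 3 → ℝ => -(y 2 + α / β * Real.log (y 0) - v / β * Real.log (y 1))) _ x :=
    (((hasFDerivAt_apply 2 x).add ((hlog 0 hS).const_mul (α / β))).sub
      ((hlog 1 hI).const_mul (v / β))).neg
  rw [hH.fderiv]
  simp [div_eq_inv_mul]

theorem hamVF_sirVaccSPoisson2 {α β v : ℝ} (hβ : β ≠ 0) {x : Fin 3 → ℝ} (hS : x 0 ≠ 0)
    (hI : x 1 ≠ 0) :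
    hamVF (sirVaccSPoisson2 β)
        (fun y => -(y 2 + α / β * Real.log (y 0) - v / β * Real.log (y 1))) x =
      ![-β * x 0 * x 1 - v * x 0, β * x 0 * x 1 - α * x 1, α * x 1 + v * x 0] := by
  ext i
  simp only [hamVF, fderiv_sirVaccSHamiltonian2 α β v hS hI, Matrix.mulVec, dotProduct,
    Fin.sum_univ_three]
  fin_cases i <;> simp [sirVaccSPoisson2] <;> field_simp <;> ring

/-- On `U = {(S,I,R) : S > 0 ∧ I > 0}`: (i) `π₂` satisfies the Jacobi identity; (ii) with the
Hamiltonian `H₂ = −(R + (α/β)·log S − (v/β)·log I)` the Hamiltonian vector field of `π₂` is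
the vector field `(−β·S·I − v·S, β·S·I − α·I, α·I + v·S)` of the SIR model with vaccination
rate `v·S`; (iii) `π₁ + π₂` also satisfies the Jacobi identity, so the two structures are
compatible. -/
theorem sirVaccinationS_biHamiltonian (α β v : ℝ) (hβ : β ≠ 0) :
    JacobiIdentityOn (sirVaccSPoisson2 β) {x : Fin 3 → ℝ | x 0 > 0 ∧ x 1 > 0} ∧
    (∀ x : Fin 3 → ℝ, x 0 > 0 → x 1 > 0 →
      hamVF (sirVaccSPoisson2 β)
          (fun y => -(y 2 + α / β * Real.log (y 0) - v / β * Real.log (y 1))) x =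
        ![-β * x 0 * x 1 - v * x 0, β * x 0 * x 1 - α * x 1, α * x 1 + v * x 0]) ∧
    JacobiIdentityOn (fun x => sirVaccSPoisson1 α β v x + sirVaccSPoisson2 β x)
      {x : Fin 3 → ℝ | x 0 > 0 ∧ x 1 > 0} :=
  ⟨jacobiIdentityOn_sirVaccSPoisson2 β _,
    fun _ hS hI => hamVF_sirVaccSPoisson2 hβ hS.ne' hI.ne',
    jacobiIdentityOn_sirVaccSPoisson1_add_sirVaccSPoisson2 α β v _⟩
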